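/- arXiv:1302.1033 — 5 statements merged into one kernel-verified Lean document; each statement's English description precedes it below -/
import Mathlib

section
/- Let r₁ ∈ (0,1), a₁ > 1, a₂ > 1, and let k₁ = (1-a₁)/(1-a₁a₂), k₂ = (1-a₂)/(1-a₁a₂). Then for all u ∈ [0,k₁] and v ∈ [0,1-k₂], one has 0 ≤ k₁ + (u-k₁)·exp(r₁(u-a₁v)) ≤ k₁, and this expression is monotone nondecreasing in u and in v on these intervals. -/
/-! The expression equals `k₁ - (k₁ - u) e^{r₁u} e^{-r₁a₁v}`. The factor `(k₁ - u) e^{r₁u}` has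
derivative `e^{r₁u} (r₁(k₁ - u) - 1)`, which is nonpositive on `[0, k₁]` because `r₁k₁ < 1`;
so it decreases from its value `k₁` at `u = 0`, which gives both the bounds and the
monotonicity in `u`. Monotonicity in `v` holds since `u - k₁ ≤ 0` and `a₁ > 0`. -/

open Real Set

lemma antitoneOn_sub_mul_exp {r k : ℝ} (hr : 0 < r) :
    AntitoneOn (fun u => (k - u) * exp (r * u)) (Ici (k - r⁻¹)) := by
  have hderiv (x : ℝ) : HasDerivAt (fun u => (k - u) * exp (r * u))
      (exp (r * x) * (r * (k - x) - 1)) x := by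
    refine (((hasDerivAt_id' x).const_sub k).mul
      ((hasDerivAt_id' x).const_mul r).exp).congr_deriv ?_
    ring
  refine antitoneOn_of_deriv_nonpos (convex_Ici _)
    (fun x _ => (hderiv x).continuousAt.continuousWithinAt)
    (fun x _ => (hderiv x).differentiableAt.differentiableWithinAt) fun x hx => ?_
  rw [interior_Ici, mem_Ioi] at hx
  have hrx : r * (k - x) ≤ 1 := by
    have := mul_lt_mul_of_pos_left (sub_lt_comm.mp hx) hr
    rw [mul_inv_cancel₀ hr.ne'] at this
    exact this.le
  rw [(hderiv x).deriv]
  exact mul_nonpos_of_nonneg_of_nonpos (exp_pos _).le (by linarith)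

lemma one_sub_div_one_sub_mul_le_one {a₁ a₂ : ℝ} (ha₁ : 1 < a₁) (ha₂ : 1 < a₂) :
    (1 - a₁) / (1 - a₁ * a₂) ≤ 1 :=
  (div_le_one_of_neg (by nlinarith)).mpr (by nlinarith)

theorem stmt5_general (r₁ a₁ a₂ k₁ k₂ : ℝ) (hr : r₁ ∈ Set.Ioo (0:ℝ) 1)
    (ha₁ : 1 < a₁) (ha₂ : 1 < a₂)
    (hk₁ : k₁ = (1 - a₁) / (1 - a₁ * a₂)) :
    (∀ u ∈ Set.Icc (0:ℝ) k₁, ∀ v ∈ Set.Icc (0:ℝ) (1 - k₂),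
      0 ≤ k₁ + (u - k₁) * Real.exp (r₁ * (u - a₁ * v)) ∧
      k₁ + (u - k₁) * Real.exp (r₁ * (u - a₁ * v)) ≤ k₁) ∧
    (∀ v ∈ Set.Icc (0:ℝ) (1 - k₂),
      MonotoneOn (fun u => k₁ + (u - k₁) * Real.exp (r₁ * (u - a₁ * v))) (Set.Icc 0 k₁)) ∧
    (∀ u ∈ Set.Icc (0:ℝ) k₁,
      MonotoneOn (fun v => k₁ + (u - k₁) * Real.exp (r₁ * (u - a₁ * v))) (Set.Icc 0 (1 - k₂))) := by
  obtain ⟨hr0, hr1⟩ := hr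
  have hk₁r : k₁ ≤ r₁⁻¹ :=
    (hk₁ ▸ one_sub_div_one_sub_mul_le_one ha₁ ha₂).trans ((one_le_inv₀ hr0).mpr hr1.le)
  have hanti : AntitoneOn (fun u => (k₁ - u) * exp (r₁ * u)) (Icc 0 k₁) :=
    antitoneOn_sub_mul_exp hr0 |>.mono fun u hu => by simp only [mem_Ici]; linarith [hu.1]
  have hsplit (u v : ℝ) : k₁ + (u - k₁) * exp (r₁ * (u - a₁ * v)) =
      k₁ - (k₁ - u) * exp (r₁ * u) * exp (-(r₁ * a₁ * v)) := by
    rw [mul_assoc, ← exp_add]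
    ring_nf
  refine ⟨fun u hu v hv => ⟨?_, ?_⟩, fun v _ u₁ hu₁ u₂ hu₂ h => ?_,
    fun u hu v₁ _ v₂ _ h => ?_⟩
  · have hg : (k₁ - u) * exp (r₁ * u) ≤ k₁ := by
      simpa using hanti ⟨le_rfl, hu.1.trans hu.2⟩ hu hu.1
    have hexp : exp (-(r₁ * a₁ * v)) ≤ 1 :=
      exp_le_one_iff.mpr (by nlinarith [mul_pos hr0 (zero_lt_one.trans ha₁), hv.1])
    have hg0 : 0 ≤ (k₁ - u) * exp (r₁ * u) := mul_nonneg (by linarith [hu.2]) (exp_pos _).le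
    rw [hsplit, sub_nonneg]
    exact (mul_le_of_le_one_right hg0 hexp).trans hg
  · nlinarith [exp_pos (r₁ * (u - a₁ * v)), hu.2]
  · simp only [hsplit]
    exact sub_le_sub_left (mul_le_mul_of_nonneg_right (hanti hu₁ hu₂ h) (exp_pos _).le) _
  · have hexp : exp (r₁ * (u - a₁ * v₂)) ≤ exp (r₁ * (u - a₁ * v₁)) :=
      exp_le_exp.mpr (by nlinarith [mul_pos hr0 (zero_lt_one.trans ha₁)])
    simpa using mul_le_mul_of_nonpos_left hexp (by linarith [hu.2])

theorem stmt5 (r₁ a₁ a₂ k₁ k₂ : ℝ) (hr : r₁ ∈ Set.Ioo (0:ℝ) 1)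
    (ha₁ : 1 < a₁) (ha₂ : 1 < a₂)
    (hk₁ : k₁ = (1 - a₁) / (1 - a₁ * a₂)) (hk₂ : k₂ = (1 - a₂) / (1 - a₁ * a₂)) :
    (∀ u ∈ Set.Icc (0:ℝ) k₁, ∀ v ∈ Set.Icc (0:ℝ) (1 - k₂),
      0 ≤ k₁ + (u - k₁) * Real.exp (r₁ * (u - a₁ * v)) ∧
      k₁ + (u - k₁) * Real.exp (r₁ * (u - a₁ * v)) ≤ k₁) ∧
    (∀ v ∈ Set.Icc (0:ℝ) (1 - k₂),
      MonotoneOn (fun u => k₁ + (u - k₁) * Real.exp (r₁ * (u - a₁ * v))) (Set.Icc 0 k₁)) ∧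
    (∀ u ∈ Set.Icc (0:ℝ) k₁,
      MonotoneOn (fun v => k₁ + (u - k₁) * Real.exp (r₁ * (u - a₁ * v))) (Set.Icc 0 (1 - k₂))) :=
  stmt5_general r₁ a₁ a₂ k₁ k₂ hr ha₁ ha₂ hk₁
end

section
/- Let r₂ ∈ (0,1), a₂ > 1, a₁ > 1, and let k₁ = (1-a₁)/(1-a₁a₂), k₂ = (1-a₂)/(1-a₁a₂). Then for all u ∈ [0,k₁] and v ∈ [0,1-k₂], one has 0 ≤ -k₂ + (v+k₂)·exp(r₂(a₂u-v)) ≤ 1-k₂, and this expression is monotone nondecreasing in u and in v on these intervals. -/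
/-!
The second component of the shifted map is `f(u, v) = -k + (v + k) e^{r(a u - v)}`. It is
nondecreasing in `u`, and nondecreasing in `v` as long as `r (v + k) ≤ 1`, because
`w ↦ w e^{-r w}` increases up to `w = 1/r`. Since `f(0, 0) = 0` and, by `a₂ k₁ + k₂ = 1`,
`f(k₁, 1 - k₂) = 1 - k₂`, monotonicity traps `f` on the box between these two values.
-/

open Real Set

noncomputable def shiftedRicker (r a k u v : ℝ) : ℝ := -k + (v + k) * exp (r * (a * u - v))

section

variable {r a k : ℝ}

theorem monotoneOn_mul_exp_neg_mul (hr : 0 < r) :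
    MonotoneOn (fun w => w * exp (-(r * w))) (Iic r⁻¹) := by
  have hderiv : ∀ w, HasDerivAt (fun w => w * exp (-(r * w)))
      (exp (-(r * w)) * (1 - r * w)) w := fun w =>
    ((hasDerivAt_id' w).fun_mul ((hasDerivAt_id' w).const_mul r).fun_neg.exp).congr_deriv
      (by ring)
  refine monotoneOn_of_deriv_nonneg (convex_Iic _)
    (fun w _ => (hderiv w).continuousAt.continuousWithinAt)
    (fun w _ => (hderiv w).differentiableAt.differentiableWithinAt) fun w hw => ?_
  rw [interior_Iic, mem_Iio] at hw
  have hrw : r * w < 1 := by simpa [hr.ne'] using mul_lt_mul_of_pos_left hw hr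
  rw [(hderiv w).deriv]
  exact mul_nonneg (exp_pos _).le (by linarith)

theorem shiftedRicker_zero_zero : shiftedRicker r a k 0 0 = 0 := by
  simp [shiftedRicker]

theorem shiftedRicker_one_sub {u : ℝ} (h : a * u + k = 1) :
    shiftedRicker r a k u (1 - k) = 1 - k := by
  rw [shiftedRicker, show a * u - (1 - k) = 0 by linarith, mul_zero, exp_zero]
  ring

theorem monotone_shiftedRicker_left {v : ℝ} (hr : 0 ≤ r) (ha : 0 ≤ a) (hv : 0 ≤ v + k) :
    Monotone fun u => shiftedRicker r a k u v := fun x y hxy => by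
  simp only [shiftedRicker]
  gcongr

theorem monotoneOn_shiftedRicker_right (u : ℝ) (hr : 0 < r) :
    MonotoneOn (fun v => shiftedRicker r a k u v) (Iic (r⁻¹ - k)) := by
  intro x hx y hy hxy
  have hmono := monotoneOn_mul_exp_neg_mul hr
    (show x + k ∈ Iic r⁻¹ by simp only [mem_Iic] at hx ⊢; linarith)
    (show y + k ∈ Iic r⁻¹ by simp only [mem_Iic] at hy ⊢; linarith) (by linarith)
  have hfactor : ∀ v, shiftedRicker r a k u v =
      -k + exp (r * (a * u + k)) * ((v + k) * exp (-(r * (v + k)))) := by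
    intro v
    rw [shiftedRicker, mul_left_comm, ← exp_add]
    ring_nf
  simp only [hfactor]
  simp only at hmono
  gcongr

theorem monotoneOn_shiftedRicker_right_of_le_one (u : ℝ) (hr₀ : 0 < r) (hr₁ : r ≤ 1) :
    MonotoneOn (fun v => shiftedRicker r a k u v) (Iic (1 - k)) :=
  (monotoneOn_shiftedRicker_right u hr₀).mono
    (Iic_subset_Iic.2 (by linarith [one_le_inv_iff₀.2 ⟨hr₀, hr₁⟩]))

theorem shiftedRicker_mem_Icc {K u v : ℝ} (hr₀ : 0 < r) (hr₁ : r ≤ 1) (ha : 0 ≤ a)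
    (hk : 0 ≤ k) (hsum : a * K + k = 1) (hu : u ∈ Icc 0 K) (hv : v ∈ Icc 0 (1 - k)) :
    shiftedRicker r a k u v ∈ Icc 0 (1 - k) := by
  have hk_le : k ≤ 1 := by linarith [mul_nonneg ha (hu.1.trans hu.2)]
  constructor
  · calc 0 = shiftedRicker r a k 0 0 := shiftedRicker_zero_zero.symm
      _ ≤ shiftedRicker r a k 0 v :=
        monotoneOn_shiftedRicker_right_of_le_one 0 hr₀ hr₁
          (show (0 : ℝ) ≤ 1 - k by linarith) hv.2 hv.1
      _ ≤ shiftedRicker r a k u v :=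
        monotone_shiftedRicker_left hr₀.le ha (by linarith [hv.1]) hu.1
  · calc shiftedRicker r a k u v ≤ shiftedRicker r a k u (1 - k) :=
        monotoneOn_shiftedRicker_right_of_le_one u hr₀ hr₁ hv.2 (mem_Iic.2 le_rfl) hv.2
      _ ≤ shiftedRicker r a k K (1 - k) :=
        monotone_shiftedRicker_left hr₀.le ha (by linarith) hu.2
      _ = 1 - k := shiftedRicker_one_sub hsum

end

theorem stmt6 (r₂ a₁ a₂ k₁ k₂ : ℝ) (hr : r₂ ∈ Set.Ioo (0:ℝ) 1)
    (ha₁ : 1 < a₁) (ha₂ : 1 < a₂)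
    (hk₁ : k₁ = (1 - a₁) / (1 - a₁ * a₂)) (hk₂ : k₂ = (1 - a₂) / (1 - a₁ * a₂)) :
    (∀ u ∈ Set.Icc (0:ℝ) k₁, ∀ v ∈ Set.Icc (0:ℝ) (1 - k₂),
      0 ≤ -k₂ + (v + k₂) * Real.exp (r₂ * (a₂ * u - v)) ∧
      -k₂ + (v + k₂) * Real.exp (r₂ * (a₂ * u - v)) ≤ 1 - k₂) ∧
    (∀ v ∈ Set.Icc (0:ℝ) (1 - k₂),
      MonotoneOn (fun u => -k₂ + (v + k₂) * Real.exp (r₂ * (a₂ * u - v))) (Set.Icc 0 k₁)) ∧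
    (∀ u ∈ Set.Icc (0:ℝ) k₁,
      MonotoneOn (fun v => -k₂ + (v + k₂) * Real.exp (r₂ * (a₂ * u - v))) (Set.Icc 0 (1 - k₂))) := by
  obtain ⟨hr₀, hr₁⟩ := hr
  have hden : 1 - a₁ * a₂ < 0 := by nlinarith
  have hk₂pos : 0 < k₂ := hk₂ ▸ div_pos_of_neg_of_neg (by linarith) hden
  have hsum : a₂ * k₁ + k₂ = 1 := by
    rw [hk₁, hk₂, mul_div_assoc', ← add_div, div_eq_one_iff_eq hden.ne]
    ring
  refine ⟨fun u hu v hv => ?_, fun v hv => ?_, fun u _ => ?_⟩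
  · exact shiftedRicker_mem_Icc hr₀ hr₁.le (by linarith) hk₂pos.le hsum hu hv
  · exact (monotone_shiftedRicker_left hr₀.le (by linarith) (by linarith [hv.1])).monotoneOn _
  · exact (monotoneOn_shiftedRicker_right_of_le_one u hr₀ hr₁.le).mono Icc_subset_Iic_self
end

section
/- Let r₁, r₂ ∈ (0,1), a₁, a₂ > 1, and k₁ = (1-a₁)/(1-a₁a₂), k₂ = (1-a₂)/(1-a₁a₂). Let m₁, m₂ ≥ 1 be real numbers (representing moment generating values ∫ e^{μy} lᵢ(y) dy), and define the 2×2 matrix B with entries B₁₁ = (1-r₁k₁)m₁, B₁₂ = a₁r₁k₁m₂, B₂₁ = a₂r₂k₂m₁, B₂₂ = (1-r₂k₂)m₂. If m₁ ≤ m₂, then det(m₁·I - B) < 0; consequently the largest eigenvalue of B is strictly greater than m₁. -/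
/-!
Writing `cᵢ = rᵢkᵢ > 0`, the determinant simplifies to
`c₁m₁(m₁ - m₂) - (a₁a₂ - 1)c₁c₂m₁m₂`, which is negative since `m₁ ≤ m₂` and `a₁a₂ > 1`.
A negative value of the characteristic polynomial `(μ - tr/2)² - Δ` at `μ` forces
`|μ - tr/2| < √Δ`, so `μ` lies strictly below the larger root.
-/

theorem Matrix.det_smul_one_sub_fin_two {R : Type*} [CommRing R] (μ a b c d : R) :
    (μ • (1 : Matrix (Fin 2) (Fin 2) R) - !![a, b; c, d]).det = (μ - a) * (μ - d) - b * c := by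
  have hmat : μ • (1 : Matrix (Fin 2) (Fin 2) R) - !![a, b; c, d] =
      !![μ - a, -b; -c, μ - d] := by
    ext i j
    fin_cases i <;> fin_cases j <;> simp
  rw [hmat, Matrix.det_fin_two_of]
  ring

theorem Matrix.lt_principal_eigenvalue_fin_two_of_det_neg {μ a b c d : ℝ}
    (h : (μ • (1 : Matrix (Fin 2) (Fin 2) ℝ) - !![a, b; c, d]).det < 0) :
    μ < (a + d) / 2 + Real.sqrt (((a - d) / 2) ^ 2 + b * c) := by
  rw [Matrix.det_smul_one_sub_fin_two] at h
  have := Real.lt_sqrt_of_sq_lt (x := μ - (a + d) / 2) (y := ((a - d) / 2) ^ 2 + b * c)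
    (by linear_combination h)
  linarith

theorem competition_char_poly_neg {c₁ c₂ a₁ a₂ m₁ m₂ : ℝ} (hc₁ : 0 < c₁) (hc₂ : 0 < c₂)
    (ha : 1 < a₁ * a₂) (hm₁ : 0 < m₁) (hle : m₁ ≤ m₂) :
    (m₁ - (1 - c₁) * m₁) * (m₁ - (1 - c₂) * m₂) - a₁ * c₁ * m₂ * (a₂ * c₂ * m₁) < 0 := by
  have hm₂ : 0 < m₂ := hm₁.trans_le hle
  have hgap : c₁ * m₁ * (m₁ - m₂) ≤ 0 :=
    mul_nonpos_of_nonneg_of_nonpos (by positivity) (by linarith)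
  have hcross : 0 < (a₁ * a₂ - 1) * (c₁ * c₂ * m₁ * m₂) :=
    mul_pos (by linarith) (by positivity)
  linear_combination hgap + hcross

theorem stmt10_general (r₁ r₂ a₁ a₂ k₁ k₂ m₁ m₂ : ℝ)
    (hr₁ : r₁ ∈ Set.Ioo (0:ℝ) 1) (hr₂ : r₂ ∈ Set.Ioo (0:ℝ) 1)
    (ha₁ : 1 < a₁) (ha₂ : 1 < a₂)
    (hk₁ : k₁ = (1 - a₁) / (1 - a₁ * a₂)) (hk₂ : k₂ = (1 - a₂) / (1 - a₁ * a₂))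
    (hm₁ : 1 ≤ m₁) (hle : m₁ ≤ m₂) :
    Matrix.det (m₁ • (1 : Matrix (Fin 2) (Fin 2) ℝ) -
      !![(1 - r₁ * k₁) * m₁, a₁ * r₁ * k₁ * m₂; a₂ * r₂ * k₂ * m₁, (1 - r₂ * k₂) * m₂]) < 0 ∧
    m₁ < ((1 - r₁ * k₁) * m₁ + (1 - r₂ * k₂) * m₂) / 2 +
      Real.sqrt ((((1 - r₁ * k₁) * m₁ - (1 - r₂ * k₂) * m₂) / 2) ^ 2 +
        (a₁ * r₁ * k₁ * m₂) * (a₂ * r₂ * k₂ * m₁)) := by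
  have ha : 1 < a₁ * a₂ := by nlinarith
  have hk₁pos : 0 < k₁ := hk₁ ▸ div_pos_of_neg_of_neg (by linarith) (by linarith)
  have hk₂pos : 0 < k₂ := hk₂ ▸ div_pos_of_neg_of_neg (by linarith) (by linarith)
  have hchar := competition_char_poly_neg (mul_pos hr₁.1 hk₁pos) (mul_pos hr₂.1 hk₂pos)
    ha (by linarith) hle
  have hdet : Matrix.det (m₁ • (1 : Matrix (Fin 2) (Fin 2) ℝ) -
      !![(1 - r₁ * k₁) * m₁, a₁ * r₁ * k₁ * m₂; a₂ * r₂ * k₂ * m₁, (1 - r₂ * k₂) * m₂]) < 0 := by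
    rw [Matrix.det_smul_one_sub_fin_two]
    linear_combination hchar
  exact ⟨hdet, Matrix.lt_principal_eigenvalue_fin_two_of_det_neg hdet⟩

theorem stmt10 (r₁ r₂ a₁ a₂ k₁ k₂ m₁ m₂ : ℝ)
    (hr₁ : r₁ ∈ Set.Ioo (0:ℝ) 1) (hr₂ : r₂ ∈ Set.Ioo (0:ℝ) 1)
    (ha₁ : 1 < a₁) (ha₂ : 1 < a₂)
    (hk₁ : k₁ = (1 - a₁) / (1 - a₁ * a₂)) (hk₂ : k₂ = (1 - a₂) / (1 - a₁ * a₂))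
    (hm₁ : 1 ≤ m₁) (hm₂ : 1 ≤ m₂) (hle : m₁ ≤ m₂) :
    Matrix.det (m₁ • (1 : Matrix (Fin 2) (Fin 2) ℝ) -
      !![(1 - r₁ * k₁) * m₁, a₁ * r₁ * k₁ * m₂; a₂ * r₂ * k₂ * m₁, (1 - r₂ * k₂) * m₂]) < 0 ∧
    m₁ < ((1 - r₁ * k₁) * m₁ + (1 - r₂ * k₂) * m₂) / 2 +
      Real.sqrt ((((1 - r₁ * k₁) * m₁ - (1 - r₂ * k₂) * m₂) / 2) ^ 2 +
        (a₁ * r₁ * k₁ * m₂) * (a₂ * r₂ * k₂ * m₁)) :=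
  stmt10_general r₁ r₂ a₁ a₂ k₁ k₂ m₁ m₂ hr₁ hr₂ ha₁ ha₂ hk₁ hk₂ hm₁ hle
end

section
/- Under the hypotheses r₁, r₂ ∈ (0,1), a₁, a₂ > 1, k₁ = (1-a₁)/(1-a₁a₂), k₂ = (1-a₂)/(1-a₁a₂), and m₁, m₂ ≥ 1 with m₁ ≤ m₂, the key determinant identity holds: det(m₁·I - B) = r₁k₁m₁·(m₁ - m₂ + (1-a₁a₂)r₂k₂m₂), where B is the matrix with entries B₁₁ = (1-r₁k₁)m₁, B₁₂ = a₁r₁k₁m₂, B₂₁ = a₂r₂k₂m₁, B₂₂ = (1-r₂k₂)m₂, and this quantity is ≤ (1-a₁a₂)r₁k₁r₂k₂m₁m₂ < 0. -/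
theorem one_sub_mul_neg_of_one_lt {a b : ℝ} (ha : 1 < a) (hb : 1 < b) : 1 - a * b < 0 := by
  nlinarith

theorem div_one_sub_mul_pos_of_one_lt {a b : ℝ} (ha : 1 < a) (hb : 1 < b) :
    0 < (1 - a) / (1 - a * b) :=
  div_pos_of_neg_of_neg (by linarith) (one_sub_mul_neg_of_one_lt ha hb)

theorem det_smul_one_sub_linearization (r₁ r₂ a₁ a₂ k₁ k₂ m₁ m₂ : ℝ) :
    Matrix.det (m₁ • (1 : Matrix (Fin 2) (Fin 2) ℝ) -
        !![(1 - r₁ * k₁) * m₁, a₁ * r₁ * k₁ * m₂; a₂ * r₂ * k₂ * m₁, (1 - r₂ * k₂) * m₂]) =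
      r₁ * k₁ * m₁ * (m₁ - m₂ + (1 - a₁ * a₂) * r₂ * k₂ * m₂) := by
  rw [Matrix.det_fin_two]
  simp only [Matrix.sub_apply, Matrix.smul_apply, Matrix.one_fin_two, Matrix.of_apply,
    Matrix.cons_val', Matrix.cons_val_zero, Matrix.cons_val_one, Matrix.empty_val',
    Matrix.cons_val_fin_one, smul_eq_mul]
  ring

theorem stmt11_general (r₁ r₂ a₁ a₂ k₁ k₂ m₁ m₂ : ℝ)
    (hr₁ : r₁ ∈ Set.Ioo (0:ℝ) 1) (hr₂ : r₂ ∈ Set.Ioo (0:ℝ) 1)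
    (ha₁ : 1 < a₁) (ha₂ : 1 < a₂)
    (hk₁ : k₁ = (1 - a₁) / (1 - a₁ * a₂)) (hk₂ : k₂ = (1 - a₂) / (1 - a₁ * a₂))
    (hm₁ : 1 ≤ m₁) (hle : m₁ ≤ m₂) :
    Matrix.det (m₁ • (1 : Matrix (Fin 2) (Fin 2) ℝ) -
        !![(1 - r₁ * k₁) * m₁, a₁ * r₁ * k₁ * m₂; a₂ * r₂ * k₂ * m₁, (1 - r₂ * k₂) * m₂]) =
      r₁ * k₁ * m₁ * (m₁ - m₂ + (1 - a₁ * a₂) * r₂ * k₂ * m₂) ∧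
    r₁ * k₁ * m₁ * (m₁ - m₂ + (1 - a₁ * a₂) * r₂ * k₂ * m₂) ≤
      (1 - a₁ * a₂) * r₁ * k₁ * r₂ * k₂ * m₁ * m₂ ∧
    (1 - a₁ * a₂) * r₁ * k₁ * r₂ * k₂ * m₁ * m₂ < 0 := by
  have hk₁_pos : 0 < k₁ := hk₁ ▸ div_one_sub_mul_pos_of_one_lt ha₁ ha₂
  have hk₂_pos : 0 < k₂ := by
    rw [hk₂, mul_comm a₁]
    exact div_one_sub_mul_pos_of_one_lt ha₂ ha₁
  have hm₁_pos : 0 < m₁ := by linarith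
  have hm₂_pos : 0 < m₂ := by linarith
  have hr₁_pos : 0 < r₁ := hr₁.1
  have hr₂_pos : 0 < r₂ := hr₂.1
  refine ⟨det_smul_one_sub_linearization .., ?_, ?_⟩
  · have hc : 0 ≤ r₁ * k₁ * m₁ := by positivity
    linear_combination mul_nonpos_of_nonneg_of_nonpos hc (sub_nonpos.2 hle)
  · have hprod : 0 < r₁ * k₁ * r₂ * k₂ * m₁ * m₂ := by positivity
    linear_combination mul_neg_of_neg_of_pos (one_sub_mul_neg_of_one_lt ha₁ ha₂) hprod

theorem stmt11 (r₁ r₂ a₁ a₂ k₁ k₂ m₁ m₂ : ℝ)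
    (hr₁ : r₁ ∈ Set.Ioo (0:ℝ) 1) (hr₂ : r₂ ∈ Set.Ioo (0:ℝ) 1)
    (ha₁ : 1 < a₁) (ha₂ : 1 < a₂)
    (hk₁ : k₁ = (1 - a₁) / (1 - a₁ * a₂)) (hk₂ : k₂ = (1 - a₂) / (1 - a₁ * a₂))
    (hm₁ : 1 ≤ m₁) (hm₂ : 1 ≤ m₂) (hle : m₁ ≤ m₂) :
    Matrix.det (m₁ • (1 : Matrix (Fin 2) (Fin 2) ℝ) -
        !![(1 - r₁ * k₁) * m₁, a₁ * r₁ * k₁ * m₂; a₂ * r₂ * k₂ * m₁, (1 - r₂ * k₂) * m₂]) =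
      r₁ * k₁ * m₁ * (m₁ - m₂ + (1 - a₁ * a₂) * r₂ * k₂ * m₂) ∧
    r₁ * k₁ * m₁ * (m₁ - m₂ + (1 - a₁ * a₂) * r₂ * k₂ * m₂) ≤
      (1 - a₁ * a₂) * r₁ * k₁ * r₂ * k₂ * m₁ * m₂ ∧
    (1 - a₁ * a₂) * r₁ * k₁ * r₂ * k₂ * m₁ * m₂ < 0 :=
  stmt11_general r₁ r₂ a₁ a₂ k₁ k₂ m₁ m₂ hr₁ hr₂ ha₁ ha₂ hk₁ hk₂ hm₁ hle
end

section
/- Let r₁, r₂ ∈ (0,1) and a₁, a₂ > 1. For the planar map G(u,v) = (1-(1-u)e^{r₁(u-a₁v)}, v·e^{r₂(1-a₂-v+a₂u)}) on [0,1]², the points (0,0), (1,0), (1-k₁, k₂), and (1,1) are exactly its fixed points, where k₁ = (1-a₁)/(1-a₁a₂), k₂ = (1-a₂)/(1-a₁a₂). Moreover, neither (1,0) ≤ (1-k₁,k₂) componentwise nor (1-k₁,k₂) ≤ (1,0) componentwise. -/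
theorem stmt15 (r₁ r₂ a₁ a₂ k₁ k₂ : ℝ)
    (hr₁ : r₁ ∈ Set.Ioo (0:ℝ) 1) (hr₂ : r₂ ∈ Set.Ioo (0:ℝ) 1)
    (ha₁ : 1 < a₁) (ha₂ : 1 < a₂)
    (hk₁ : k₁ = (1 - a₁) / (1 - a₁ * a₂)) (hk₂ : k₂ = (1 - a₂) / (1 - a₁ * a₂)) :
    (∀ u ∈ Set.Icc (0:ℝ) 1, ∀ v ∈ Set.Icc (0:ℝ) 1,
      ((u = 1 - (1 - u) * Real.exp (r₁ * (u - a₁ * v)) ∧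
        v = v * Real.exp (r₂ * (1 - a₂ - v + a₂ * u))) ↔
        ((u, v) = (0, 0) ∨ (u, v) = (1, 0) ∨ (u, v) = (1 - k₁, k₂) ∨ (u, v) = (1, 1)))) ∧
    ¬((1:ℝ) ≤ 1 - k₁ ∧ (0:ℝ) ≤ k₂) ∧ ¬(1 - k₁ ≤ (1:ℝ) ∧ k₂ ≤ (0:ℝ)) := by
  obtain ⟨hr₁0, hr₁1⟩ := hr₁
  obtain ⟨hr₂0, hr₂1⟩ := hr₂
  have ha : 1 < a₁ * a₂ := by nlinarith
  have hd : 1 - a₁ * a₂ < 0 := by linarith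
  have hd0 : 1 - a₁ * a₂ ≠ 0 := ne_of_lt hd
  have hk₁pos : 0 < k₁ := by
    rw [hk₁]; exact div_pos_of_neg_of_neg (by linarith) hd
  have hk₂pos : 0 < k₂ := by
    rw [hk₂]; exact div_pos_of_neg_of_neg (by linarith) hd
  have e1 : 1 - k₁ - a₁ * k₂ = 0 := by
    rw [hk₁, hk₂]; field_simp; ring
  have e2 : 1 - a₂ - k₂ + a₂ * (1 - k₁) = 0 := by
    rw [hk₁, hk₂]
    have h3 : (1 - a₂) / (1 - a₁ * a₂) * (1 - a₁ * a₂) = 1 - a₂ := div_mul_cancel₀ _ hd0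
    have h4 : (1 - a₁) / (1 - a₁ * a₂) * (1 - a₁ * a₂) = 1 - a₁ := div_mul_cancel₀ _ hd0
    apply mul_right_cancel₀ hd0
    linear_combination -h3 - a₂ * h4
  refine ⟨?_, ?_, ?_⟩
  · intro u hu v hv
    constructor
    · rintro ⟨h1, h2⟩
      have h1' : (1 - u) * (Real.exp (r₁ * (u - a₁ * v)) - 1) = 0 := by
        linear_combination h1
      have h2' : v * (Real.exp (r₂ * (1 - a₂ - v + a₂ * u)) - 1) = 0 := by
        linear_combination -h2
      have H1 : u = 1 ∨ u = a₁ * v := by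
        rcases mul_eq_zero.mp h1' with h | h
        · left; linarith
        · right
          have : r₁ * (u - a₁ * v) = 0 := Real.exp_injective (by rw [Real.exp_zero]; linarith)
          rcases mul_eq_zero.mp this with h' | h'
          · linarith
          · linarith
      have H2 : v = 0 ∨ v = 1 - a₂ + a₂ * u := by
        rcases mul_eq_zero.mp h2' with h | h
        · left; exact h
        · right
          have : r₂ * (1 - a₂ - v + a₂ * u) = 0 := Real.exp_injective (by rw [Real.exp_zero]; linarith)
          rcases mul_eq_zero.mp this with h' | h'
          · linarith
          · linarith
      rcases H1 with hu1 | hu1 <;> rcases H2 with hv1 | hv1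
      · exact Or.inr (Or.inl (by simp [hu1, hv1]))
      · refine Or.inr (Or.inr (Or.inr ?_))
        have : v = 1 := by rw [hv1, hu1]; ring
        simp [hu1, this]
      · exact Or.inl (by simp [hu1, hv1])
      · refine Or.inr (Or.inr (Or.inl ?_))
        have hv2 : v = k₂ := by
          rw [hk₂]
          rw [eq_div_iff hd0]
          nlinarith [hv1, hu1]
        have hu2 : u = 1 - k₁ := by
          rw [hu1, hv2]; linarith [e1]
        simp [hu2, hv2]
    · rintro (h | h | h | h) <;>
        (rw [Prod.mk.injEq] at h; obtain ⟨h1, h2⟩ := h; subst h1; subst h2)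
      · constructor
        · norm_num
        · norm_num
      · constructor
        · norm_num
        · norm_num
      · constructor
        · rw [e1, mul_zero, Real.exp_zero]; ring
        · rw [e2, mul_zero, Real.exp_zero]; ring
      · constructor
        · norm_num
        · rw [show (1:ℝ) - a₂ - 1 + a₂ * 1 = 0 from by ring, mul_zero, Real.exp_zero]; ring
  · rintro ⟨h, -⟩; linarith
  · rintro ⟨-, h⟩; linarith
end
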